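/- arXiv:2208.00805 — 8 statements merged into one kernel-verified Lean document; each statement's English description precedes it below -/
import Mathlib

section
/- For every start time s ≥ e_1 and every k with 1 ≤ k ≤ m, the recursively defined departure time admits the closed form B_k(s) = max( s + Σ_{p<k} t_p , max_{2≤m'≤k} ( e_{m'} + Σ_{m'≤p<k} t_p ) ). -/
open Finset

/-- Departure times along a route, 0-indexed: Lean index `k` is the paper's
location `k+1`, `t k` is the travel time from location `k` to `k+1`, `e k` is
the time-window start of location `k`.  `depTime e t s 0 = s` and
`depTime e t s (k+1) = max (e (k+1)) (depTime e t s k + t k)`. -/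
noncomputable def depTime (e t : ℕ → ℝ) (s : ℝ) : ℕ → ℝ
  | 0 => s
  | k + 1 => max (e (k + 1)) (depTime e t s k + t k)

/-- Unrolling the max-plus recursion: `x k` is attained at the last index `j ≤ k` where the
maximum chose `a j`; from there on only the travel times `t j, …, t (k - 1)` are added. -/
theorem eq_sup'_range_of_succ_eq_max {α : Type*} [AddCommMonoid α] [LinearOrder α]
    [AddRightMono α] {x a t : ℕ → α} (h0 : x 0 = a 0)
    (hsucc : ∀ k, x (k + 1) = max (a (k + 1)) (x k + t k)) (k : ℕ) :
    x k = (range (k + 1)).sup' nonempty_range_add_one fun j => a j + ∑ p ∈ Ico j k, t p := by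
  induction k with
  | zero => simp [h0]
  | succ k ih =>
    have hshift : ((range (k + 1)).sup' nonempty_range_add_one fun j =>
        a j + ∑ p ∈ Ico j k, t p) + t k =
        (range (k + 1)).sup' nonempty_range_add_one fun j =>
          a j + ∑ p ∈ Ico j (k + 1), t p := by
      -- in a linear order every monotone map commutes with `sup'`
      let addTravel : α →o α := ⟨(· + t k), fun _ _ h => add_le_add_left h _⟩
      refine (map_finset_sup' addTravel _ _).trans (sup'_congr _ rfl fun j hj => ?_)
      change a j + ∑ p ∈ Ico j k, t p + t k = _
      rw [sum_Ico_succ_top (Nat.le_of_lt_succ (mem_range.mp hj)), add_assoc]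
    rw [hsucc, ih, hshift, sup'_congr _ (range_add_one (n := k + 1)) fun _ _ => rfl, sup'_insert,
      Ico_self, sum_empty, add_zero]

theorem stmt_0 (e t : ℕ → ℝ) (s : ℝ) (k : ℕ) :
    depTime e t s k =
      (insert 0 (Finset.Icc 1 k)).sup' (by simp) fun j =>
        (if j = 0 then s else e j) + ∑ p ∈ Finset.Ico j k, t p := by
  have hindex : insert 0 (Icc 1 k) = range (k + 1) := by
    ext j
    simp only [mem_insert, mem_Icc, mem_range]
    omega
  rw [sup'_congr _ hindex fun _ _ => rfl]
  exact eq_sup'_range_of_succ_eq_max (x := depTime e t s) (a := fun j => if j = 0 then s else e j)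
    rfl (fun k => by rw [if_neg k.succ_ne_zero, depTime]) k
end

section
/- For every start time s ≥ e_1, every delay δ ≥ 0, and every k with 1 ≤ k ≤ m, it holds that B_k(s+δ) = B_k(s) + max(δ − W_k(s), 0); in particular B_k(s) ≤ B_k(s+δ) ≤ B_k(s) + δ, i.e., each departure time is a nondecreasing 1-Lipschitz function of the start time. -/
/-- Cumulative waiting time before location `k`:
`W_k(s) = B_k(s) − s − Σ_{p<k} t_p`. -/
noncomputable def wait (e t : ℕ → ℝ) (s : ℝ) (k : ℕ) : ℝ :=
  depTime e t s k - s - ∑ p ∈ Finset.range k, t p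

lemma wait_nonneg (e t : ℕ → ℝ) (s : ℝ) (k : ℕ) : 0 ≤ wait e t s k := by
  induction k with
  | zero => simp [wait, depTime]
  | succ k ih =>
    have : depTime e t s k + t k ≤ depTime e t s (k + 1) := le_max_right _ _
    simp only [wait, Finset.sum_range_succ] at *
    linarith

lemma key (e t : ℕ → ℝ) (s δ : ℝ) (hδ : 0 ≤ δ) (k : ℕ) :
    depTime e t (s + δ) k = depTime e t s k + max (δ - wait e t s k) 0 := by
  induction k with
  | zero => simp [depTime, wait, hδ]
  | succ k ih =>
    have hW : 0 ≤ wait e t s k := wait_nonneg e t s k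
    have hle : depTime e t s k + t k ≤ max (e (k+1)) (depTime e t s k + t k) :=
      le_max_right _ _
    have hWs : wait e t s (k+1) =
        max (e (k+1)) (depTime e t s k + t k) - (depTime e t s k + t k)
        + wait e t s k := by
      simp only [wait, Finset.sum_range_succ, depTime]; ring
    simp only [depTime, ih, hWs]
    set a := e (k+1)
    set b := depTime e t s k + t k
    set d := δ - wait e t s k
    have heq : δ - (max a b - b + wait e t s k) = d - (max a b - b) := by ring
    have hbd : ∀ x : ℝ, depTime e t s k + x + t k = b + x := fun x => by
      simp only [b]; ring
    rw [hbd, heq]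
    rcases le_total a b with hab | hab
    · rw [max_eq_right hab]
      have h1 : (0:ℝ) ≤ max d 0 := le_max_right _ _
      rw [max_eq_right (by linarith : a ≤ b + max d 0)]
      have : d - (b - b) = d := by ring
      rw [this]
    · rw [max_eq_left hab]
      rcases le_total d (a - b) with hd | hd
      · have hM : max d 0 ≤ a - b := max_le hd (by linarith)
        rw [max_eq_left (by linarith : b + max d 0 ≤ a),
            max_eq_right (by linarith : d - (a - b) ≤ 0), add_zero]
      · have h0 : (0:ℝ) ≤ d := le_trans (by linarith) hd
        rw [max_eq_left h0, max_eq_right (by linarith : a ≤ b + d),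
            max_eq_left (by linarith : (0:ℝ) ≤ d - (a - b))]
        ring

/-- for every start time `s ≥ e_1`, delay `δ ≥ 0` and location `k`
of the route (paper locations `1 ≤ k ≤ m` are Lean indices `k < m`),
`B_k(s+δ) = B_k(s) + max (δ − W_k(s)) 0`; in particular
`B_k(s) ≤ B_k(s+δ) ≤ B_k(s) + δ`. -/
theorem stmt_1 (m : ℕ) (e t : ℕ → ℝ) (ht : ∀ p, 0 ≤ t p)
    (s : ℝ) (hs : e 0 ≤ s) (δ : ℝ) (hδ : 0 ≤ δ)
    (k : ℕ) (hk : k < m) :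
    depTime e t (s + δ) k = depTime e t s k + max (δ - wait e t s k) 0 ∧
    depTime e t s k ≤ depTime e t (s + δ) k ∧
    depTime e t (s + δ) k ≤ depTime e t s k + δ := by
  have h := key e t s δ hδ k
  have hW := wait_nonneg e t s k
  refine ⟨h, ?_, ?_⟩ <;> rw [h]
  · have := le_max_right (δ - wait e t s k) (0:ℝ); linarith
  · have : max (δ - wait e t s k) 0 ≤ δ := max_le (by linarith) hδ
    linarith
end

section
/- For every start time s ≥ e_1, every delay δ ≥ 0, and every k with 1 ≤ k ≤ m, the cumulative waiting time satisfies W_k(s+δ) = max(W_k(s) − δ, 0). -/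
lemma wait_succ (e t : ℕ → ℝ) (s : ℝ) (k : ℕ) :
    wait e t s (k + 1) =
      max (e (k + 1) - s - ∑ p ∈ Finset.range (k + 1), t p) (wait e t s k) := by
  unfold wait
  rw [show depTime e t s (k + 1) = max (e (k + 1)) (depTime e t s k + t k) from rfl,
    Finset.sum_range_succ, ← max_sub_sub_right, ← max_sub_sub_right]
  ring_nf

/-- for every start time `s ≥ e_1`, delay `δ ≥ 0` and location `k`
of the route (paper locations `1 ≤ k ≤ m` are Lean indices `k < m`), the
cumulative waiting time satisfies `W_k(s+δ) = max (W_k(s) − δ) 0`. -/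
theorem stmt_2 (m : ℕ) (e t : ℕ → ℝ) (ht : ∀ p, 0 ≤ t p)
    (s : ℝ) (hs : e 0 ≤ s) (δ : ℝ) (hδ : 0 ≤ δ)
    (k : ℕ) (hk : k < m) :
    wait e t (s + δ) k = max (wait e t s k - δ) 0 := by
  induction k with
  | zero =>
      simp [wait, depTime, max_eq_right (by linarith : -δ ≤ (0:ℝ))]
  | succ k ih =>
      rw [wait_succ, wait_succ, ih (Nat.lt_of_succ_lt hk)]
      have : e (k + 1) - (s + δ) - ∑ p ∈ Finset.range (k + 1), t p
          = (e (k + 1) - s - ∑ p ∈ Finset.range (k + 1), t p) - δ := by ring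
      rw [this, ← max_sub_sub_right, max_assoc]
end

section
/- Define the duration of the route started at s as L(s) = B_m(s) − s, and its total waiting time as W(s) = W_m(s). Then for every start time s ≥ e_1 and every delay δ ≥ 0, the duration satisfies L(s+δ) = L(s) − min(W(s), δ) and the total waiting time satisfies W(s+δ) = max(W(s) − δ, 0). -/
/-- Duration of a route with `m` locations (Lean indices `0, …, m-1`, so the
paper's last location `m` is index `m-1`) started at `s`: `L(s) = B_m(s) − s`. -/
noncomputable def duration (e t : ℕ → ℝ) (m : ℕ) (s : ℝ) : ℝ :=
  depTime e t s (m - 1) - s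

/-- Total waiting time of the route: `W(s) = W_m(s)`. -/
noncomputable def totalWait (e t : ℕ → ℝ) (m : ℕ) (s : ℝ) : ℝ :=
  wait e t s (m - 1)

lemma depTime_add (e t : ℕ → ℝ) (s δ : ℝ) (hδ : 0 ≤ δ) (k : ℕ) :
    depTime e t (s + δ) k = max (depTime e t s k) (s + δ + ∑ p ∈ Finset.range k, t p) := by
  induction k with
  | zero => simp [depTime]; linarith
  | succ k ih =>
      rw [depTime, depTime, ih, Finset.sum_range_succ, ← max_add_add_right, ← max_assoc]
      ring_nf

/-- for every start time `s ≥ e_1` and every delay `δ ≥ 0`, the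
duration satisfies `L(s+δ) = L(s) − min (W(s)) δ` and the total waiting time
satisfies `W(s+δ) = max (W(s) − δ) 0`. -/
theorem stmt_5 (m : ℕ) (hm : 0 < m) (e t : ℕ → ℝ) (ht : ∀ p, 0 ≤ t p)
    (s : ℝ) (hs : e 0 ≤ s) (δ : ℝ) (hδ : 0 ≤ δ) :
    duration e t m (s + δ) = duration e t m s - min (totalWait e t m s) δ ∧
    totalWait e t m (s + δ) = max (totalWait e t m s - δ) 0 := by
  unfold duration totalWait wait
  rw [depTime_add e t s δ hδ]
  set B := depTime e t s (m - 1)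
  set T := ∑ p ∈ Finset.range (m - 1), t p
  constructor
  · rcases le_total (B - s - T) δ with h | h
    · rw [min_eq_left h, max_eq_right (by linarith)]; ring
    · rw [min_eq_right h, max_eq_left (by linarith)]; ring
  · rcases le_total (B - s - T) δ with h | h
    · rw [max_eq_right (by linarith : B ≤ s + δ + T), max_eq_right (by linarith)]; ring
    · rw [max_eq_left (by linarith : s + δ + T ≤ B), max_eq_left (by linarith)]; ring
end

section
/- In the merged route, the arrival time at the last location of the second route equals s₂ + L₂(s₂) − min(Δ + W₂(s₂), 0), where Δ = s₂ − (a + t_{ij}), L₂(s₂) is the duration of the second route started at s₂, and W₂(s₂) its total waiting time. Equivalently: if Δ ≥ 0 the end time is unchanged (s₂ + L₂(s₂)), and if Δ < 0 the end time increases by max(−Δ − W₂(s₂), 0). -/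
lemma depTime_max (e t : ℕ → ℝ) (s u : ℝ) (k : ℕ) :
    depTime e t (max s u) k = max (depTime e t s k) (u + ∑ p ∈ Finset.range k, t p) := by
  induction k with
  | zero => simp [depTime]
  | succ k ih =>
      simp only [depTime, ih, Finset.sum_range_succ]
      rw [← max_add_add_right, ← max_assoc, max_comm (e (k+1)), max_assoc, add_assoc, max_assoc]

lemma depTime_ge (e t : ℕ → ℝ) (s : ℝ) (k : ℕ) :
    s + ∑ p ∈ Finset.range k, t p ≤ depTime e t s k := by
  induction k with
  | zero => simp [depTime]
  | succ k ih =>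
      simp only [depTime, Finset.sum_range_succ]
      calc s + (∑ p ∈ Finset.range k, t p + t k)
          = (s + ∑ p ∈ Finset.range k, t p) + t k := by ring
        _ ≤ depTime e t s k + t k := by linarith
        _ ≤ _ := le_max_right _ _

/-- when merging, the first route ends at location `i` with
departure time `a`; the second route has `m` locations (indices `0, …, m-1`,
its first location `j` being index `0`) with window starts `e`, travel times
`t ≥ 0` and baseline start `s₂ ≥ e_j`; `tij ≥ 0` is the travel time from `i`
to `j`, and in the merged route the second route is started at
`max s₂ (a + tij)`.  With `Δ = s₂ − (a + tij)`, `L₂ = L₂(s₂)` the duration and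
`W₂ = W₂(s₂)` the total waiting time of the second route, the arrival at the
last location of the second route in the merged route equals
`s₂ + L₂ − min (Δ + W₂) 0`; equivalently, if `Δ ≥ 0` it equals `s₂ + L₂` and
if `Δ < 0` it equals `s₂ + L₂ + max (−Δ − W₂) 0`. -/
theorem stmt_6 (m : ℕ) (hm : 0 < m) (e t : ℕ → ℝ) (ht : ∀ p, 0 ≤ t p)
    (s₂ a tij : ℝ) (hs₂ : e 0 ≤ s₂) (htij : 0 ≤ tij)
    (Δ L₂ W₂ : ℝ)
    (hΔ : Δ = s₂ - (a + tij))
    (hL₂ : L₂ = depTime e t s₂ (m - 1) - s₂)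
    (hW₂ : W₂ = wait e t s₂ (m - 1)) :
    depTime e t (max s₂ (a + tij)) (m - 1) = s₂ + L₂ - min (Δ + W₂) 0 ∧
    (0 ≤ Δ → depTime e t (max s₂ (a + tij)) (m - 1) = s₂ + L₂) ∧
    (Δ < 0 → depTime e t (max s₂ (a + tij)) (m - 1)
        = s₂ + L₂ + max (-Δ - W₂) 0) := by

  set k := m - 1
  set c := a + tij
  set T := ∑ p ∈ Finset.range k, t p with hT
  have hmax : depTime e t (max s₂ c) k = max (depTime e t s₂ k) (c + T) :=
    depTime_max e t s₂ c k
  have hge : s₂ + T ≤ depTime e t s₂ k := depTime_ge e t s₂ k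
  have hΔW : Δ + W₂ = depTime e t s₂ k - (c + T) := by
    rw [hΔ, hW₂]; simp [wait, ← hT]; ring
  have hmain : depTime e t (max s₂ c) k = s₂ + L₂ - min (Δ + W₂) 0 := by
    rw [hmax, hΔW, hL₂]
    rcases le_total (depTime e t s₂ k) (c + T) with h | h
    · rw [max_eq_right h, min_eq_left (by linarith)]; ring
    · rw [max_eq_left h, min_eq_right (by linarith)]; ring
  refine ⟨hmain, ?_, ?_⟩
  · intro hΔ0
    have hW0 : 0 ≤ W₂ := by rw [hW₂]; simp [wait, ← hT]; linarith
    rw [hmain, min_eq_right (by linarith)]; ring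
  · intro _
    rw [hmain]
    rcases le_total (Δ + W₂) 0 with h | h
    · rw [min_eq_left h, max_eq_left (by linarith)]; ring
    · rw [min_eq_right h, max_eq_right (by linarith)]; ring
end

section
/- Let R, R' ⊆ P be rejection sets and let d_i ∈ [0, d^max_i] for i ∈ P\R and d'_i ∈ [0, d^max_i] for i ∈ P\R' be arbitrary relative detours. If Σ_{i∈R} q_i < Σ_{i∈R'} q_i (fewer passengers rejected), then Σ_{i∈P\R} q_i·d_i + Φ·Σ_{i∈R} q_i < Σ_{i∈P\R'} q_i·d'_i + Φ·Σ_{i∈R'} q_i. Hence a solution with fewer rejected passengers always has a strictly smaller objective value, regardless of the detours incurred. -/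
/-- `P` is a finite set of requests, each `i ∈ P` with a positive
integer passenger number `q i`, direct travel time `tdir i > 0`, pickup window
start `e i` and delivery window end `l i ≥ e i + tdir i`.  The maximal relative
detour is `dmax i = (l i − e i − tdir i) / tdir i` and the rejection penalty is
`Φ = Σ_{i∈P} q_i · dmax_i + 1`.  For rejection sets `R, R' ⊆ P` and arbitrary
relative detours `d_i ∈ [0, dmax_i]` on `P \ R` and `d'_i ∈ [0, dmax_i]` on
`P \ R'`, if `Σ_{i∈R} q_i < Σ_{i∈R'} q_i` then the objective with rejection set
`R` is strictly smaller than the one with rejection set `R'`. -/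
theorem stmt_10 {ι : Type*} [DecidableEq ι] (P : Finset ι) (q : ι → ℕ) (tdir e l : ι → ℝ)
    (hq : ∀ i ∈ P, 0 < q i) (ht : ∀ i ∈ P, 0 < tdir i)
    (hl : ∀ i ∈ P, e i + tdir i ≤ l i)
    (dmax : ι → ℝ) (hdmax : ∀ i ∈ P, dmax i = (l i - e i - tdir i) / tdir i)
    (Φ : ℝ) (hΦ : Φ = ∑ i ∈ P, (q i : ℝ) * dmax i + 1)
    (R R' : Finset ι) (hR : R ⊆ P) (hR' : R' ⊆ P)
    (d d' : ι → ℝ)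
    (hd : ∀ i ∈ P \ R, 0 ≤ d i ∧ d i ≤ dmax i)
    (hd' : ∀ i ∈ P \ R', 0 ≤ d' i ∧ d' i ≤ dmax i)
    (hlt : ∑ i ∈ R, q i < ∑ i ∈ R', q i) :
    ∑ i ∈ P \ R, (q i : ℝ) * d i + Φ * ∑ i ∈ R, (q i : ℝ) <
      ∑ i ∈ P \ R', (q i : ℝ) * d' i + Φ * ∑ i ∈ R', (q i : ℝ) := by

  have hdm0 : ∀ i ∈ P, 0 ≤ dmax i := by
    intro i hi
    rw [hdmax i hi]
    have := hl i hi
    have := ht i hi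
    exact div_nonneg (by linarith) (le_of_lt (ht i hi))
  have hΦ1 : (1:ℝ) ≤ Φ := by
    rw [hΦ]
    have : 0 ≤ ∑ i ∈ P, (q i : ℝ) * dmax i :=
      Finset.sum_nonneg fun i hi => mul_nonneg (Nat.cast_nonneg _) (hdm0 i hi)
    linarith
  have hΦ0 : (0:ℝ) < Φ := by linarith
  -- LHS bound
  have h1 : ∑ i ∈ P \ R, (q i : ℝ) * d i ≤ ∑ i ∈ P, (q i : ℝ) * dmax i := by
    calc ∑ i ∈ P \ R, (q i : ℝ) * d i ≤ ∑ i ∈ P \ R, (q i : ℝ) * dmax i := by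
          apply Finset.sum_le_sum
          intro i hi
          exact mul_le_mul_of_nonneg_left (hd i hi).2 (Nat.cast_nonneg _)
      _ ≤ ∑ i ∈ P, (q i : ℝ) * dmax i := by
          apply Finset.sum_le_sum_of_subset_of_nonneg (Finset.sdiff_subset)
          intro i hi _
          exact mul_nonneg (Nat.cast_nonneg _) (hdm0 i hi)
  have h2 : (0:ℝ) ≤ ∑ i ∈ P \ R', (q i : ℝ) * d' i :=
    Finset.sum_nonneg fun i hi => mul_nonneg (Nat.cast_nonneg _) (hd' i hi).1
  have hcast : ((∑ i ∈ R, q i : ℕ) : ℝ) + 1 ≤ ((∑ i ∈ R', q i : ℕ) : ℝ) := by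
    exact_mod_cast Nat.succ_le_of_lt hlt
  have hs : ∑ i ∈ R, (q i : ℝ) = ((∑ i ∈ R, q i : ℕ) : ℝ) := by push_cast; ring
  have hs' : ∑ i ∈ R', (q i : ℝ) = ((∑ i ∈ R', q i : ℕ) : ℝ) := by push_cast; ring
  have key : Φ * ∑ i ∈ R, (q i : ℝ) + Φ ≤ Φ * ∑ i ∈ R', (q i : ℝ) := by
    rw [hs, hs']
    nlinarith [hcast, hΦ0]
  have hΦP : ∑ i ∈ P, (q i : ℝ) * dmax i = Φ - 1 := by rw [hΦ]; ring
  linarith [h1, h2, key, hΦP]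
end

section
/- Let i be a pickup with delivery i+n, let J be a finite set of other locations, and let B_i, B_{i+n}, and B_j (j ∈ J) be real numbers with B_i ≤ B_{i+n}. Let X_{i,i+n} and X_{ij} (j ∈ J) be binary with X_{i,i+n} + Σ_{j∈J} X_{ij} ≤ 1, suppose X_{i,i+n} = 1 implies B_{i+n} ≥ B_i + t_{i,i+n}, and for each j ∈ J suppose X_{ij} = 1 implies both B_j ≥ B_i + t_{ij} and B_{i+n} ≥ B_j + t_{j,i+n}, where all travel times are nonnegative. Then B_i + t_{i,i+n}·X_{i,i+n} + Σ_{j∈J} (t_{ij} + t_{j,i+n})·X_{ij} ≤ B_{i+n}; i.e., the strengthened pickup-to-delivery inequality added in the preprocessing is valid. -/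
/-- pickup `i` with delivery `i+n`; `Bi`, `Bin` and `Bj j` (for
`j` in a finite set `J` of other locations) are departure times with
`Bi ≤ Bin`; `tpd = t_{i,i+n}`, `tij j = t_{i,j}` and `tjn j = t_{j,i+n}` are
nonnegative travel times; the binaries `X0 = X_{i,i+n}` and `X j = X_{ij}`
satisfy `X0 + Σ_{j∈J} X j ≤ 1`; `X0 = 1` implies `Bin ≥ Bi + tpd`, and
`X j = 1` implies both `Bj j ≥ Bi + tij j` and `Bin ≥ Bj j + tjn j`.  Then the
strengthened pickup-to-delivery inequality
`Bi + tpd·X0 + Σ_{j∈J} (tij j + tjn j)·X j ≤ Bin` is valid. -/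
theorem stmt_15 {ι : Type*} (J : Finset ι) (Bi Bin tpd : ℝ)
    (Bj tij tjn : ι → ℝ)
    (htpd : 0 ≤ tpd) (htij : ∀ j ∈ J, 0 ≤ tij j) (htjn : ∀ j ∈ J, 0 ≤ tjn j)
    (hBiBin : Bi ≤ Bin)
    (X0 : ℝ) (X : ι → ℝ)
    (hX0 : X0 = 0 ∨ X0 = 1) (hX : ∀ j ∈ J, X j = 0 ∨ X j = 1)
    (hsum : X0 + ∑ j ∈ J, X j ≤ 1)
    (h0 : X0 = 1 → Bi + tpd ≤ Bin)
    (hj : ∀ j ∈ J, X j = 1 → Bi + tij j ≤ Bj j ∧ Bj j + tjn j ≤ Bin) :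
    Bi + tpd * X0 + ∑ j ∈ J, (tij j + tjn j) * X j ≤ Bin := by
  classical
  have hnn : ∀ j ∈ J, 0 ≤ X j := fun j hjJ => by
    rcases hX j hjJ with h | h <;> simp [h]
  by_cases h1 : ∃ j0 ∈ J, X j0 = 1
  · obtain ⟨j0, hj0J, hj01⟩ := h1
    have hsumJ : 1 ≤ ∑ j ∈ J, X j := by
      calc 1 = X j0 := hj01.symm
        _ ≤ ∑ j ∈ J, X j := Finset.single_le_sum hnn hj0J
    have hX0' : X0 = 0 := by
      rcases hX0 with h | h
      · exact h
      · linarith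
    have hrest : ∀ j ∈ J, j ≠ j0 → X j = 0 := by
      intro j hjJ hne
      by_contra hne0
      have hj1 : X j = 1 := (hX j hjJ).resolve_left hne0
      have hsub : ({j0, j} : Finset ι) ⊆ J := by
        intro x hx
        simp only [Finset.mem_insert, Finset.mem_singleton] at hx
        rcases hx with rfl | rfl <;> assumption
      have h2 : (2 : ℝ) ≤ ∑ j ∈ J, X j := by
        have := Finset.sum_le_sum_of_subset_of_nonneg hsub
          (fun x hx _ => hnn x hx)
        have heq : ∑ x ∈ ({j0, j} : Finset ι), X x = 2 := by
          rw [Finset.sum_pair (Ne.symm hne)]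
          rw [hj01, hj1]; norm_num
        linarith [heq ▸ this]
      linarith
    have hsumeq : ∑ j ∈ J, (tij j + tjn j) * X j = tij j0 + tjn j0 := by
      rw [Finset.sum_eq_single_of_mem j0 hj0J
        (fun b hbJ hb => by rw [hrest b hbJ hb, mul_zero])]
      rw [hj01, mul_one]
    obtain ⟨ha, hb⟩ := hj j0 hj0J hj01
    rw [hsumeq, hX0', mul_zero]
    linarith
  · push_neg at h1
    have hzero : ∀ j ∈ J, X j = 0 := fun j hjJ =>
      (hX j hjJ).resolve_right (h1 j hjJ)
    have hsumeq : ∑ j ∈ J, (tij j + tjn j) * X j = 0 := by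
      apply Finset.sum_eq_zero
      intro j hjJ
      rw [hzero j hjJ, mul_zero]
    rw [hsumeq]
    rcases hX0 with h | h
    · rw [h, mul_zero]; linarith
    · rw [h, mul_one]; linarith [h0 h]
end

section
/- Suppose x satisfies: every vertex in P ∪ D has at most one selected incoming arc and at most one selected outgoing arc; no selected arc enters 0 and no selected arc leaves 2n+1; the selected arcs form a union of directed paths, each starting at 0 and ending at 2n+1 with internal vertices in P ∪ D and each internal vertex on at most one path; and for every request i ∈ P, the pickup i and the delivery n+i either both lie on no path, or both lie on the same path with i preceding n+i. Then for every vertex set S with 0 ∈ S, 2n+1 ∉ S, and some request i with i ∉ S and n+i ∈ S, the subtour/precedence elimination constraint Σ_{u∈S, v∈S} x_{uv} ≤ |S| − 2 holds. -/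
/-- Consecutive pairs of `m` are consecutive pairs of `m ++ r`. -/
lemma zip_tail_append_right {α : Type*} {p : α × α} (r : List α) :
    ∀ (m : List α), p ∈ m.zip m.tail → p ∈ (m ++ r).zip (m ++ r).tail
  | [], h => by simp at h
  | [a], h => by simp at h
  | a :: b :: m, h => by
    simp only [List.tail_cons, List.zip_cons_cons, List.mem_cons] at h
    rcases h with h | h
    · simp [h]
    · have := zip_tail_append_right r (b :: m) h
      simp only [List.cons_append, List.tail_cons, List.zip_cons_cons, List.mem_cons]
      right
      simpa using this

/-- Consecutive pairs of `t` are consecutive pairs of `c :: t`. -/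
lemma zip_tail_cons {α : Type*} {p : α × α} (c : α) :
    ∀ (t : List α), p ∈ t.zip t.tail → p ∈ (c :: t).zip t
  | [], h => by simp at h
  | d :: t, h => by
    simp only [List.zip_cons_cons, List.mem_cons]
    right
    simpa using h

/-- Consecutive pairs of `m` are consecutive pairs of `l ++ m`. -/
lemma zip_tail_append_left {α : Type*} {p : α × α} (m : List α) :
    ∀ (l : List α), p ∈ m.zip m.tail → p ∈ (l ++ m).zip (l ++ m).tail
  | [], h => h
  | c :: l, h => by
    simp only [List.cons_append, List.tail_cons]
    exact zip_tail_cons c (l ++ m) (zip_tail_append_left m l h)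

/-- A list from outside `S` to inside `S` has a consecutive pair exiting/entering. -/
lemma exit_pair (S : Finset ℕ) (b : ℕ) (hb : b ∈ S) :
    ∀ (m : List ℕ) (a : ℕ), a ∉ S →
      ∃ u w : ℕ, (u, w) ∈ (a :: (m ++ [b])).zip (m ++ [b]) ∧ u ∉ S ∧ w ∈ S
  | [], a, ha => ⟨a, b, by simp, ha, hb⟩
  | c :: m, a, ha => by
    by_cases hc : c ∈ S
    · exact ⟨a, c, by simp, ha, hc⟩
    · obtain ⟨u, w, hz, hu, hw⟩ := exit_pair S b hb m c hc
      refine ⟨u, w, ?_, hu, hw⟩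
      simp only [List.cons_append, List.zip_cons_cons, List.mem_cons]
      right
      simpa using hz

/-- with `n ≥ 1` requests, pickups `P = {1,…,n}`, deliveries
`D = {n+1,…,2n}`, start depot `0` and end depot `2n+1`, let `A` be the set of
selected arcs (arc `(u,v) ∈ A` iff `x_{uv} = 1`).  Suppose: every vertex of
`P ∪ D` has at most one selected incoming and at most one selected outgoing
arc; no selected arc enters `0` and none leaves `2n+1`; the selected arcs are
exactly the arcs of a family of directed paths `paths κ`, each starting at
`0`, ending at `2n+1`, with internal vertices in `P ∪ D`, without repeated
vertices, and with each internal vertex on at most one path; and for every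
request `i`, the pickup `i` and delivery `n+i` either both lie on no path, or
both lie on the same path with `i` preceding `n+i`.  Then for every vertex
set `S` with `0 ∈ S`, `2n+1 ∉ S` and some request `i` with `i ∉ S` and
`n+i ∈ S`, the constraint `Σ_{u∈S, v∈S} x_{uv} ≤ |S| − 2` holds. -/
theorem stmt_19 (n : ℕ) (hn : 1 ≤ n)
    (A : Finset (ℕ × ℕ)) (K : ℕ) (paths : Fin K → List ℕ)
    (hA : ∀ a : ℕ × ℕ, a ∈ A ↔ ∃ κ : Fin K, a ∈ (paths κ).zip (paths κ).tail)
    (hstart : ∀ κ : Fin K, (paths κ).head? = some 0)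
    (hend : ∀ κ : Fin K, (paths κ).getLast? = some (2 * n + 1))
    (hinternal : ∀ κ : Fin K, ∀ v ∈ (paths κ).tail.dropLast, 1 ≤ v ∧ v ≤ 2 * n)
    (hnodup : ∀ κ : Fin K, (paths κ).Nodup)
    (hdisjoint : ∀ κ κ' : Fin K, κ ≠ κ' → ∀ v : ℕ, 1 ≤ v → v ≤ 2 * n →
      v ∈ paths κ → v ∉ paths κ')
    (hdegIn : ∀ j : ℕ, 1 ≤ j → j ≤ 2 * n →
      (A.filter fun a => a.2 = j).card ≤ 1)
    (hdegOut : ∀ i : ℕ, 1 ≤ i → i ≤ 2 * n →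
      (A.filter fun a => a.1 = i).card ≤ 1)
    (hno0 : ∀ a ∈ A, a.2 ≠ 0)
    (hnoEnd : ∀ a ∈ A, a.1 ≠ 2 * n + 1)
    (hpair : ∀ i : ℕ, 1 ≤ i → i ≤ n →
      (∀ κ : Fin K, i ∉ paths κ ∧ n + i ∉ paths κ) ∨
      (∃ (κ : Fin K) (l₁ l₂ l₃ : List ℕ),
        paths κ = l₁ ++ i :: l₂ ++ (n + i) :: l₃))
    (S : Finset ℕ) (hS0 : 0 ∈ S) (hSend : 2 * n + 1 ∉ S)
    (i : ℕ) (hi1 : 1 ≤ i) (hin : i ≤ n) (hiS : i ∉ S) (hniS : n + i ∈ S) :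
    ((A.filter fun a => a.1 ∈ S ∧ a.2 ∈ S).card : ℤ) ≤ (S.card : ℤ) - 2 := by
  -- every vertex on a path which is not a depot is in [1, 2n]
  have hbound : ∀ (κ : Fin K) (v : ℕ), v ∈ paths κ → v ≠ 0 → v ≠ 2 * n + 1 →
      1 ≤ v ∧ v ≤ 2 * n := by
    intro κ v hv hv0 hvend
    rcases hpκ : paths κ with _ | ⟨c, t⟩
    · rw [hpκ] at hv; simp at hv
    · have hc : c = 0 := by
        have := hstart κ; rw [hpκ] at this; simpa using this
      rw [hpκ] at hv
      rcases List.mem_cons.mp hv with h | h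
      · exact absurd (h.trans hc) hv0
      · have ht : t ≠ [] := by rintro rfl; simp at h
      -- t's last element is 2n+1, the rest are internal
        have hlast : (2 * n + 1) ∈ t.getLast? := by
          have := hend κ; rw [hpκ] at this
          rcases t with _ | ⟨d, t'⟩
          · simp at ht
          · rw [List.getLast?_cons_cons] at this; rw [this]; rfl
        have hsplit : t.dropLast ++ [2 * n + 1] = t :=
          List.dropLast_append_getLast? _ hlast
        rw [← hsplit] at h
        rcases List.mem_append.mp h with h | h
        · have := hinternal κ v (by rw [hpκ]; simpa using h)
          exact this
        · simp at h; exact absurd h hvend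
  -- the head of any selected arc lies on some path
  have hApath : ∀ a ∈ A, ∃ κ : Fin K, a.2 ∈ paths κ := by
    intro a ha
    obtain ⟨κ, hz⟩ := (hA a).mp ha
    obtain ⟨-, h2⟩ := List.of_mem_zip (show (a.1, a.2) ∈ _ from hz)
    exact ⟨κ, List.mem_of_mem_tail h2⟩
  -- find w ∈ S, w ≠ 0, such that no within-S arc enters w
  obtain ⟨w, hwS, hw0, hwkey⟩ :
      ∃ w : ℕ, w ∈ S ∧ w ≠ 0 ∧ ∀ a ∈ A, a.2 = w → a.1 ∉ S := by
    rcases hpair i hi1 hin with hnone | ⟨κ, l₁, l₂, l₃, hpath⟩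
    · refine ⟨n + i, hniS, by omega, ?_⟩
      intro a ha haw
      exfalso
      obtain ⟨κ, hmem⟩ := hApath a ha
      rw [haw] at hmem
      exact (hnone κ).2 hmem
    · -- the segment from i to n+i
      set seg : List ℕ := i :: (l₂ ++ [n + i]) with hseg
      have hpath' : paths κ = l₁ ++ (seg ++ l₃) := by
        rw [hpath]; simp [hseg]
      -- l₁ starts with 0
      obtain ⟨l₁', rfl⟩ : ∃ l₁', l₁ = 0 :: l₁' := by
        rcases l₁ with _ | ⟨c, l₁'⟩
        · exfalso
          have := hstart κ; rw [hpath'] at this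
          simp [hseg] at this
          omega
        · have := hstart κ; rw [hpath'] at this
          simp only [List.cons_append, List.head?_cons, Option.some.injEq] at this
          exact ⟨l₁', by rw [this]⟩
      obtain ⟨u, w, hz, huS, hwS⟩ := exit_pair S (n + i) hniS l₂ i hiS
      have hzseg : (u, w) ∈ seg.zip seg.tail := by simpa [hseg] using hz
      have huwA : (u, w) ∈ A := by
        rw [hA]
        refine ⟨κ, ?_⟩
        rw [hpath']
        exact zip_tail_append_left _ _ (zip_tail_append_right _ _ hzseg)
      have hwseg : w ∈ seg := by
        obtain ⟨-, h2⟩ := List.of_mem_zip hzseg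
        exact List.mem_of_mem_tail h2
      have hwpath : w ∈ paths κ := by
        rw [hpath']; simp [hwseg]
      have hw0 : w ≠ 0 := by
        intro hw
        have hnd := hnodup κ
        rw [hpath'] at hnd
        simp only [List.cons_append, List.nodup_cons] at hnd
        exact hnd.1 (by subst hw; simp [hwseg])
      have hwend : w ≠ 2 * n + 1 := by
        intro h; rw [h] at hwS; exact hSend hwS
      obtain ⟨hw1, hw2⟩ := hbound κ w hwpath hw0 hwend
      refine ⟨w, hwS, hw0, ?_⟩
      intro a ha haw
      have hcard := hdegIn w hw1 hw2
      have ha' : a ∈ A.filter fun a => a.2 = w := Finset.mem_filter.mpr ⟨ha, haw⟩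
      have huw' : (u, w) ∈ A.filter fun a => a.2 = w :=
        Finset.mem_filter.mpr ⟨huwA, rfl⟩
      have : a = (u, w) := Finset.card_le_one.mp hcard a ha' (u, w) huw'
      rw [this]
      exact huS
  -- injection: arc ↦ head, into S \ {0, w}
  have hinj : (A.filter fun a => a.1 ∈ S ∧ a.2 ∈ S).card ≤ ((S.erase 0).erase w).card := by
    apply Finset.card_le_card_of_injOn (fun a => a.2)
    · intro a ha
      have hm := Finset.mem_filter.mp ha
      obtain ⟨haA, haS1, haS2⟩ : a ∈ A ∧ a.1 ∈ S ∧ a.2 ∈ S := ⟨hm.1, hm.2⟩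
      refine Finset.mem_erase.mpr ⟨?_, Finset.mem_erase.mpr ⟨hno0 a haA, haS2⟩⟩
      intro haw
      exact hwkey a haA haw haS1
    · intro a ha b hb hab
      simp only [Finset.coe_filter, Set.mem_setOf_eq] at ha hb
      obtain ⟨haA, haS1, haS2⟩ := ha
      obtain ⟨hbA, hbS1, hbS2⟩ := hb
      set v := a.2 with hv
      have hv0 : v ≠ 0 := hno0 a haA
      have hvend : v ≠ 2 * n + 1 := by
        intro h; rw [h] at haS2; exact hSend haS2
      obtain ⟨κ, hvp⟩ := hApath a haA
      obtain ⟨hv1, hv2⟩ := hbound κ v hvp hv0 hvend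
      have hcard := hdegIn v hv1 hv2
      have ha' : a ∈ A.filter fun x => x.2 = v := Finset.mem_filter.mpr ⟨haA, rfl⟩
      have hb' : b ∈ A.filter fun x => x.2 = v :=
        Finset.mem_filter.mpr ⟨hbA, hab.symm⟩
      exact Finset.card_le_one.mp hcard a ha' b hb'
  have hwE : w ∈ S.erase 0 := Finset.mem_erase.mpr ⟨hw0, hwS⟩
  have h1 : ((S.erase 0).erase w).card = (S.erase 0).card - 1 :=
    Finset.card_erase_of_mem hwE
  have h2 : (S.erase 0).card = S.card - 1 := Finset.card_erase_of_mem hS0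
  have h3 : 2 ≤ S.card := by
    have hsub : ({0, w} : Finset ℕ) ⊆ S := by
      intro x hx
      rcases Finset.mem_insert.mp hx with rfl | hx
      · exact hS0
      · rw [Finset.mem_singleton.mp hx]; exact hwS
    have := Finset.card_le_card hsub
    rwa [Finset.card_pair (Ne.symm hw0)] at this
  omega
end
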